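/- Let μ ≥ 0 and let N be a Poisson random variable with mean μ. Then for any δ ∈ (0,1), the probability that μ < U₋(N,δ) is at most δ, where U₋(N,δ) := max{0, N − √(2·N·log(1/δ))}. -/

import Mathlib

/-!
Let `k` be the least `n` with `μ < U₋(n,δ)`. Every such `n` is at least `k`, and `μ < U₋(k,δ)` means
`log(1/δ) < (k-μ)²/(2k)`. The Chernoff bound `P[N ≥ k] ≤ e^{k-μ}(μ/k)^k`, obtained by comparing the
Poisson weights `μⁿ ≤ (μ/k)^k kⁿ` for `n ≥ k`, is at most `exp(-(k-μ)²/(2k))` by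
`log(1-y) ≤ -y - y²/2` with `y = 1 - μ/k`, hence at most `δ`.
-/

open MeasureTheory ProbabilityTheory Real
open scoped NNReal ENNReal

/-- Lower confidence bound: `U₋(N,δ) = max{0, N − √(2·N·log(1/δ))}`. -/
noncomputable def Uminus (N δ : ℝ) : ℝ :=
  max 0 (N - Real.sqrt (2 * N * Real.log (1 / δ)))

open scoped Nat

lemma Real.log_one_sub_le_neg_sub_sq_div_two {y : ℝ} (hy₀ : 0 ≤ y) (hy₁ : y < 1) :
    log (1 - y) ≤ -y - y ^ 2 / 2 := by
  have hs := hasSum_pow_div_log_of_abs_lt_one (abs_lt.2 ⟨by linarith, hy₁⟩)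
  have h := sum_le_hasSum (Finset.range 2) (fun n _ => by positivity) hs
  norm_num [Finset.sum_range_succ] at h
  linarith

lemma exp_sub_mul_div_pow_le {m : ℝ} {k : ℕ} (hm : 0 ≤ m) (hmk : m ≤ k) (hk : 0 < k) :
    exp (k - m) * (m / k) ^ k ≤ exp (-((k - m) ^ 2 / (2 * k))) := by
  have hk' : (0 : ℝ) < k := Nat.cast_pos.2 hk
  rcases hm.eq_or_lt with rfl | hm
  · simp [zero_pow hk.ne']; positivity
  have hlog := Real.log_one_sub_le_neg_sub_sq_div_two (y := 1 - m / k)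
    (by rw [sub_nonneg, div_le_one hk']; exact hmk) (by linarith [div_pos hm hk'])
  rw [sub_sub_cancel] at hlog
  rw [← exp_log (div_pos hm hk'), ← exp_nat_mul, ← exp_add, exp_le_exp]
  have hexpand : (k : ℝ) * (1 - m / k + (1 - m / k) ^ 2 / 2) = k - m + (k - m) ^ 2 / (2 * k) := by
    field_simp
  nlinarith [mul_le_mul_of_nonneg_left hlog hk'.le]

lemma poissonMeasure_Ici_le {r : ℝ≥0} {k : ℕ} (hk : 0 < k) (hrk : (r : ℝ) ≤ k) :
    poissonMeasure r (Set.Ici k) ≤ ENNReal.ofReal (exp (k - r) * (r / k) ^ k) := by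
  have hk' : (0 : ℝ) < k := Nat.cast_pos.2 hk
  set c := (r / k : ℝ) ^ k
  have hsum : HasSum (fun n : ℕ => c * (exp (-r) * ((k : ℝ) ^ n / n !))) (c * exp (k - r)) := by
    have h := ((NormedSpace.expSeries_div_hasSum_exp (k : ℝ)).mul_left (exp (-r))).mul_left c
    rwa [← exp_eq_exp_ℝ, ← exp_add, neg_add_eq_sub] at h
  have hpt : ∀ n : ℕ, ENNReal.ofReal (exp (-r) * r ^ n / n !) * Measure.dirac n (Set.Ici k) ≤
      ENNReal.ofReal (c * (exp (-r) * ((k : ℝ) ^ n / n !))) := by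
    intro n
    by_cases hn : k ≤ n
    · rw [Measure.dirac_apply_of_mem (Set.mem_Ici.2 hn), mul_one]
      refine ENNReal.ofReal_le_ofReal ?_
      have hpow : (r : ℝ) ^ n ≤ c * (k : ℝ) ^ n := calc
        (r : ℝ) ^ n = (r / k : ℝ) ^ n * (k : ℝ) ^ n := by rw [← mul_pow, div_mul_cancel₀ _ hk'.ne']
        _ ≤ c * (k : ℝ) ^ n := by
          gcongr
          exact pow_le_pow_of_le_one (by positivity) ((div_le_one hk').2 hrk) hn
      calc exp (-r) * r ^ n / n ! ≤ exp (-r) * (c * (k : ℝ) ^ n) / n ! := by gcongr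
        _ = c * (exp (-r) * ((k : ℝ) ^ n / n !)) := by ring
    · simp [hn]
  calc poissonMeasure r (Set.Ici k)
      = ∑' n : ℕ, ENNReal.ofReal (exp (-r) * r ^ n / n !) * Measure.dirac n (Set.Ici k) := by
        simp only [poissonMeasure, Measure.sum_apply _ measurableSet_Ici, Measure.smul_apply,
          smul_eq_mul]
    _ ≤ ∑' n : ℕ, ENNReal.ofReal (c * (exp (-r) * ((k : ℝ) ^ n / n !))) := ENNReal.tsum_le_tsum hpt
    _ = ENNReal.ofReal (c * exp (k - r)) :=
        (ENNReal.ofReal_tsum_of_nonneg (fun n => by positivity) hsum.summable).symm.trans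
          (by rw [hsum.tsum_eq])
    _ = _ := by rw [mul_comm]

lemma poissonMeasure_Ici_le_exp {r : ℝ≥0} {k : ℕ} (hk : 0 < k) (hrk : (r : ℝ) ≤ k) :
    poissonMeasure r (Set.Ici k) ≤ ENNReal.ofReal (exp (-((k - r) ^ 2 / (2 * k)))) :=
  (poissonMeasure_Ici_le hk hrk).trans
    (ENNReal.ofReal_le_ofReal (exp_sub_mul_div_pow_le r.coe_nonneg hrk hk))

lemma lt_and_log_one_div_lt_of_lt_Uminus {m n δ : ℝ} (hm : 0 ≤ m) (h : m < Uminus n δ) :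
    m < n ∧ log (1 / δ) < (n - m) ^ 2 / (2 * n) := by
  have h' : m < n - √(2 * n * log (1 / δ)) := by simpa [Uminus, hm.not_gt] using h
  have hmn : m < n := h'.trans_le (sub_le_self _ (sqrt_nonneg _))
  have hsqrt : √(2 * n * log (1 / δ)) < n - m := by linarith
  rw [Real.sqrt_lt' (by linarith)] at hsqrt
  refine ⟨hmn, ?_⟩
  rw [lt_div_iff₀ (by linarith)]
  linarith

/-- If `N ~ Poisson(μ)` with `μ ≥ 0` and `δ ∈ (0,1)`, then
`P[μ < U₋(N,δ)] ≤ δ`. -/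
theorem poisson_lower_confidence (μ : ℝ≥0) (δ : ℝ) (hδ : δ ∈ Set.Ioo (0 : ℝ) 1) :
    poissonMeasure μ {n : ℕ | (μ : ℝ) < Uminus (n : ℝ) δ} ≤ ENNReal.ofReal δ := by
  set S := {n : ℕ | (μ : ℝ) < Uminus (n : ℝ) δ}
  rcases S.eq_empty_or_nonempty with hS | hS
  · simp [hS]
  obtain ⟨hμk, hk⟩ := lt_and_log_one_div_lt_of_lt_Uminus μ.coe_nonneg (Nat.sInf_mem hS)
  have hδ_eq : exp (-log (1 / δ)) = δ := by rw [one_div, log_inv, neg_neg, exp_log hδ.1]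
  calc poissonMeasure μ S ≤ poissonMeasure μ (Set.Ici (sInf S)) :=
        measure_mono fun n hn => Nat.sInf_le hn
    _ ≤ ENNReal.ofReal (exp (-(((sInf S : ℕ) - μ) ^ 2 / (2 * (sInf S : ℕ))))) :=
        poissonMeasure_Ici_le_exp (by exact_mod_cast μ.coe_nonneg.trans_lt hμk) hμk.le
    _ ≤ ENNReal.ofReal δ := by
        rw [← hδ_eq]
        exact ENNReal.ofReal_le_ofReal (exp_le_exp.2 (neg_le_neg hk.le))
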